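/- (Theorem 2.) Let X be uniform on {0,1}, let L and S be finite sets with conditional pmfs satisfying P_L(l|x) > 0 and P_S(s|x) > 0 for all l, s, x, let d_v ≥ 1, and take φ_v = φ_v* and φ_ch = φ_ch*. Let B = {b_1, …, b_{|B|}} be the set of distinct values of Φ_v on L × S^{d_v−1}, labelled so that b_1 > b_2 > ⋯ > b_{|B|}, and let R be a finite output alphabet. Assume the following fact about finite binary-input channels: for every finite set Y with conditional pmf P_{Y|X} and every enumeration y_1,…,y_N of Y satisfying P_{Y|X}(y_i|0)·P_{Y|X}(y_{i+1}|1) ≥ P_{Y|X}(y_{i+1}|0)·P_{Y|X}(y_i|1) for all i and in which elements with equal likelihood ratio are consecutive, the maximum of I(X; f(Y)) over all functions f : Y → R is attained by a quantizer that is sequential with respect to this enumeration and constant on each class of equal likelihood ratio. Then the maximum of I(X; f(L, S_1,…,S_{d_v−1})) over all functions f : L × S^{d_v−1} → R, where (L, S_1,…,S_{d_v−1}) has the variable-node joint conditional pmf given X, is attained by a function of the form Λ ∘ Φ_v, where Λ : B → R maps b_i to r exactly when λ_r < i ≤ λ_{r+1} for some integers 0 = λ_0 ≤ λ_1 ≤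 ⋯ ≤ λ_{|R|} = |B|. -/

import Mathlib

/-!
Since `φ_v*` and `φ_ch*` are log-likelihood ratios, `Φ_v(l, s)` is the log-likelihood ratio
`log (P(l, s | 0) / P(l, s | 1))` of the variable-node channel. Enumerating `L × S^{d_v−1}` in
decreasing order of `Φ_v` therefore lists the outputs in decreasing likelihood ratio with ties
consecutive, so the assumed fact yields an optimal monotone quantizer `Q` of this enumeration that
is constant on ties. Such a `Q` factors through `Φ_v`, and the factor `Λ` is the required threshold
map; relabelling the outputs does not change the mutual information.
-/

open scoped BigOperators Classical

/-- Variable-node joint conditional pmf: `P(l, s | x) = P_L(l|x) · Π_i P_S(s_i|x)`. -/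
noncomputable def varPmf {L S : Type*} (PL : L → ZMod 2 → ℝ) (PS : S → ZMod 2 → ℝ)
    {d : ℕ} (l : L) (s : Fin d → S) (x : ZMod 2) : ℝ :=
  PL l x * ∏ i, PS (s i) x

/-- Combined variable-node value: `Φ_v(l, s) = φ_ch(l) + Σ_i φ_v(s_i)`. -/
noncomputable def PhiV {L S : Type*} (φv : S → ℝ) (φch : L → ℝ)
    {d : ℕ} (l : L) (s : Fin d → S) : ℝ :=
  φch l + ∑ i, φv (s i)

/-- Optimal variable-node reconstruction function `φ_v*(s) = log(P_S(s|0)/P_S(s|1))`. -/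
noncomputable def phiVStar {S : Type*} (PS : S → ZMod 2 → ℝ) (s : S) : ℝ :=
  Real.log (PS s 0 / PS s 1)

/-- Optimal channel reconstruction function `φ_ch*(l) = log(P_L(l|0)/P_L(l|1))`. -/
noncomputable def phiChStar {L : Type*} (PL : L → ZMod 2 → ℝ) (l : L) : ℝ :=
  Real.log (PL l 0 / PL l 1)

/-- Joint pmf of `(X, f(Y))` where `X` is uniform on `{0,1}` and `Y` has
conditional pmf `W` given `X`: `p(x, z) = (1/2)·Σ_{y : f(y) = z} W(y|x)`. -/
noncomputable def jointPmf {Y Z : Type*} [Fintype Y] (W : Y → ZMod 2 → ℝ)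
    (f : Y → Z) (x : ZMod 2) (z : Z) : ℝ :=
  (1 / 2 : ℝ) * ∑ y ∈ Finset.univ.filter (fun y => f y = z), W y x

/-- Mutual information `I(X; f(Y))` for `X` uniform on `{0,1}` and `Y` with
conditional pmf `W` given `X`; terms with zero joint probability are `0`. -/
noncomputable def mutualInfo {Y Z : Type*} [Fintype Y] [Fintype Z]
    (W : Y → ZMod 2 → ℝ) (f : Y → Z) : ℝ :=
  ∑ x : ZMod 2, ∑ z : Z,
    if jointPmf W f x z = 0 then 0
    else jointPmf W f x z *
      Real.log (jointPmf W f x z /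
        ((1 / 2 : ℝ) * ∑ x' : ZMod 2, jointPmf W f x' z))

open Finset

def SequentialQuantizersOptimal (M : ℕ) : Prop :=
  ∀ (N : ℕ) (W : Fin N → ZMod 2 → ℝ),
    (∀ y x, 0 ≤ W y x) → (∀ x, ∑ y : Fin N, W y x = 1) →
    (∀ (i : ℕ) (h : i + 1 < N),
      W ⟨i, Nat.lt_of_succ_lt h⟩ 0 * W ⟨i + 1, h⟩ 1 ≥
        W ⟨i + 1, h⟩ 0 * W ⟨i, Nat.lt_of_succ_lt h⟩ 1) →
    (∀ i j k : Fin N, i ≤ j → j ≤ k →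
      W i 0 * W k 1 = W k 0 * W i 1 → W i 0 * W j 1 = W j 0 * W i 1) →
    ∃ Q : Fin N → Fin M, Monotone Q ∧
      (∀ i j : Fin N, W i 0 * W j 1 = W j 0 * W i 1 → Q i = Q j) ∧
      ∀ f : Fin N → Fin M, mutualInfo W f ≤ mutualInfo W Q

section Relabel

variable {Y Y' Z : Type*} [Fintype Y] [Fintype Y'] (e : Y' ≃ Y) (W : Y → ZMod 2 → ℝ) (f : Y → Z)

theorem jointPmf_comp_equiv : jointPmf (W ∘ e) (f ∘ e) = jointPmf W f := by
  ext x z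
  unfold jointPmf
  congr 1
  exact Finset.sum_equiv e (by simp) (by simp)

theorem mutualInfo_comp_equiv [Fintype Z] : mutualInfo (W ∘ e) (f ∘ e) = mutualInfo W f := by
  simp only [mutualInfo, jointPmf_comp_equiv]

end Relabel

theorem exists_equiv_fin_antitone {Y α : Type*} [Fintype Y] [LinearOrder α] (Φ : Y → α) :
    ∃ e : Fin (Fintype.card Y) ≃ Y, Antitone (Φ ∘ e) := by
  let e₀ := (Fintype.equivFin Y).symm
  let g := fun i => OrderDual.toDual (Φ (e₀ i))
  exact ⟨(Tuple.sort g).trans e₀, fun _ _ hij => Tuple.monotone_sort g hij⟩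

theorem exists_antitoneOn_quantizer_comp_optimal {Y : Type*} [Fintype Y] {M : ℕ} (hM : 1 ≤ M)
    (hopt : SequentialQuantizersOptimal M) (W : Y → ZMod 2 → ℝ) (hW : ∀ y x, 0 ≤ W y x)
    (hW1 : ∀ x, ∑ y, W y x = 1) (Φ : Y → ℝ)
    (hΦ : ∀ y y', Φ y ≤ Φ y' ↔ W y 0 * W y' 1 ≤ W y' 0 * W y 1) :
    ∃ Λ : ℝ → Fin M, AntitoneOn Λ (Set.range Φ) ∧
      ∀ f : Y → Fin M, mutualInfo W f ≤ mutualInfo W (Λ ∘ Φ) := by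
  have hΦeq : ∀ y y', Φ y = Φ y' ↔ W y 0 * W y' 1 = W y' 0 * W y 1 := fun y y' => by
    rw [le_antisymm_iff, le_antisymm_iff, hΦ, hΦ]
  obtain ⟨e, he⟩ := exists_equiv_fin_antitone Φ
  obtain ⟨Q, hQmono, hQconst, hQopt⟩ := hopt _ (W ∘ e) (fun i => hW (e i))
    (fun x => (e.sum_comp (W · x)).trans (hW1 x))
    (fun i h => (hΦ _ _).1 (he (Nat.le_succ i)))
    (fun i j k hij hjk hik => (hΦeq _ _).1 <|
      le_antisymm ((hΦeq _ _).2 hik ▸ he hjk) (he hij))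
  have hQΦ : Function.FactorsThrough Q (Φ ∘ e) := fun i j h => hQconst i j ((hΦeq _ _).1 h)
  set Λ := Function.extend (Φ ∘ e) Q fun _ => ⟨0, hM⟩
  have hΛ : Λ ∘ Φ ∘ e = Q := funext (hQΦ.extend_apply fun _ => ⟨0, hM⟩)
  refine ⟨Λ, ?_, fun f => ?_⟩
  · rintro _ ⟨y, rfl⟩ _ ⟨y', rfl⟩ hle
    obtain ⟨i, rfl⟩ := e.surjective y
    obtain ⟨j, rfl⟩ := e.surjective y'
    change (Λ ∘ Φ ∘ e) j ≤ (Λ ∘ Φ ∘ e) i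
    rw [hΛ]
    rcases le_total j i with hji | hij
    · exact hQmono hji
    · exact (hQΦ (le_antisymm (he hij) hle)).le
  calc mutualInfo W f = mutualInfo (W ∘ e) (f ∘ e) := (mutualInfo_comp_equiv e W f).symm
    _ ≤ mutualInfo (W ∘ e) Q := hQopt _
    _ = mutualInfo W (Λ ∘ Φ) := by rw [← hΛ, ← Function.comp_assoc, mutualInfo_comp_equiv]

theorem log_div_le_log_div_iff {a₀ a₁ b₀ b₁ : ℝ} (ha₀ : 0 < a₀) (ha₁ : 0 < a₁) (hb₀ : 0 < b₀)
    (hb₁ : 0 < b₁) : Real.log (a₀ / a₁) ≤ Real.log (b₀ / b₁) ↔ a₀ * b₁ ≤ b₀ * a₁ := by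
  rw [Real.log_le_log_iff (div_pos ha₀ ha₁) (div_pos hb₀ hb₁), div_le_div_iff₀ ha₁ hb₁]

section VariableNode

variable {L S : Type*} {PL : L → ZMod 2 → ℝ} {PS : S → ZMod 2 → ℝ}

theorem varPmf_pos (hL : ∀ l x, 0 < PL l x) (hS : ∀ s x, 0 < PS s x) {d : ℕ} (l : L)
    (s : Fin d → S) (x : ZMod 2) : 0 < varPmf PL PS l s x :=
  mul_pos (hL l x) (prod_pos fun i _ => hS (s i) x)

theorem sum_varPmf [Fintype L] [Fintype S] {x : ZMod 2} (hL1 : ∑ l, PL l x = 1)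
    (hS1 : ∑ s, PS s x = 1) (d : ℕ) :
    ∑ p : L × (Fin d → S), varPmf PL PS p.1 p.2 x = 1 := by
  simp only [varPmf, Fintype.sum_prod_type, ← mul_sum,
    ← Fintype.prod_sum fun (_ : Fin d) s => PS s x, hL1, hS1, prod_const_one, mul_one]

theorem PhiV_phiVStar_phiChStar (hL : ∀ l x, 0 < PL l x) (hS : ∀ s x, 0 < PS s x) {d : ℕ}
    (l : L) (s : Fin d → S) :
    PhiV (phiVStar PS) (phiChStar PL) l s =
      Real.log (varPmf PL PS l s 0 / varPmf PL PS l s 1) := by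
  have hlog : ∀ a b : ℝ, 0 < a → 0 < b → Real.log (a / b) = Real.log a - Real.log b :=
    fun a b ha hb => Real.log_div ha.ne' hb.ne'
  have hprod : ∀ x, Real.log (∏ i, PS (s i) x) = ∑ i, Real.log (PS (s i) x) :=
    fun x => Real.log_prod fun i _ => (hS (s i) x).ne'
  rw [hlog _ _ (varPmf_pos hL hS l s 0) (varPmf_pos hL hS l s 1)]
  simp only [PhiV, phiVStar, phiChStar, varPmf]
  rw [Real.log_mul (hL l 0).ne' (prod_pos fun i _ => hS (s i) 0).ne',
    Real.log_mul (hL l 1).ne' (prod_pos fun i _ => hS (s i) 1).ne', hprod, hprod,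
    hlog _ _ (hL l 0) (hL l 1), sum_congr rfl fun i _ => hlog _ _ (hS (s i) 0) (hS (s i) 1),
    sum_sub_distrib]
  ring

end VariableNode

theorem stmt_10_general {L S : Type*} [Fintype L] [Fintype S]
    (PL : L → ZMod 2 → ℝ) (PS : S → ZMod 2 → ℝ)
    (hL : ∀ l x, 0 < PL l x) (hS : ∀ s x, 0 < PS s x)
    (hL1 : ∀ x, ∑ l : L, PL l x = 1) (hS1 : ∀ x, ∑ s : S, PS s x = 1)
    (dv : ℕ)
    (M : ℕ) (hM : 1 ≤ M)
    (hfact : ∀ (N : ℕ) (W : Fin N → ZMod 2 → ℝ),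
      (∀ y x, 0 ≤ W y x) → (∀ x, ∑ y : Fin N, W y x = 1) →
      -- the enumeration is sorted by decreasing likelihood ratio
      (∀ (i : ℕ) (h : i + 1 < N),
        W ⟨i, Nat.lt_of_succ_lt h⟩ 0 * W ⟨i + 1, h⟩ 1 ≥
          W ⟨i + 1, h⟩ 0 * W ⟨i, Nat.lt_of_succ_lt h⟩ 1) →
      -- elements with equal likelihood ratio are consecutive
      (∀ i j k : Fin N, i ≤ j → j ≤ k →
        W i 0 * W k 1 = W k 0 * W i 1 → W i 0 * W j 1 = W j 0 * W i 1) →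
      ∃ Q : Fin N → Fin M, Monotone Q ∧
        (∀ i j : Fin N, W i 0 * W j 1 = W j 0 * W i 1 → Q i = Q j) ∧
        ∀ f : Fin N → Fin M, mutualInfo W f ≤ mutualInfo W Q) :
    ∃ Λ : ℝ → Fin M,
      -- `Λ` is sequential w.r.t. the labelling `b_1 > b_2 > ⋯ > b_{|B|}` of the
      -- distinct values of `Φ_v` on `L × S^{d_v−1}`
      (∀ a b : ℝ,
        (∃ (l : L) (s : Fin (dv - 1) → S), PhiV (phiVStar PS) (phiChStar PL) l s = a) →
        (∃ (l : L) (s : Fin (dv - 1) → S), PhiV (phiVStar PS) (phiChStar PL) l s = b) →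
        a > b → Λ a ≤ Λ b) ∧
      -- and `Λ ∘ Φ_v` attains the maximal mutual information
      ∀ f : L × (Fin (dv - 1) → S) → Fin M,
        mutualInfo (fun p : L × (Fin (dv - 1) → S) => varPmf PL PS p.1 p.2) f ≤
          mutualInfo (fun p : L × (Fin (dv - 1) → S) => varPmf PL PS p.1 p.2)
            (fun p => Λ (PhiV (phiVStar PS) (phiChStar PL) p.1 p.2)) := by
  have hΦ (p q : L × (Fin (dv - 1) → S)) :
      PhiV (phiVStar PS) (phiChStar PL) p.1 p.2 ≤ PhiV (phiVStar PS) (phiChStar PL) q.1 q.2 ↔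
        varPmf PL PS p.1 p.2 0 * varPmf PL PS q.1 q.2 1 ≤
          varPmf PL PS q.1 q.2 0 * varPmf PL PS p.1 p.2 1 := by
    simp only [PhiV_phiVStar_phiChStar hL hS]
    exact log_div_le_log_div_iff (varPmf_pos hL hS _ _ 0) (varPmf_pos hL hS _ _ 1)
      (varPmf_pos hL hS _ _ 0) (varPmf_pos hL hS _ _ 1)
  obtain ⟨Λ, hΛmono, hΛopt⟩ := exists_antitoneOn_quantizer_comp_optimal hM hfact
    (fun p : L × (Fin (dv - 1) → S) => varPmf PL PS p.1 p.2) (fun p x => (varPmf_pos hL hS p.1 p.2 x).le)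
    (fun x => sum_varPmf (hL1 x) (hS1 x) _) _ hΦ
  refine ⟨Λ, ?_, hΛopt⟩
  rintro a b ⟨l, s, rfl⟩ ⟨l', s', rfl⟩ hab
  exact hΛmono ⟨(l', s'), rfl⟩ ⟨(l, s), rfl⟩ hab.le

/-- Theorem 2: with `φ_v = φ_v*` and `φ_ch = φ_ch*`, the maximum of
`I(X; f(L, S_1,…,S_{d_v−1}))` over all `f : L × S^{d_v−1} → R` (with
`R = {0,…,M−1}`) is attained by a function of the form `Λ ∘ Φ_v`, where `Λ` is
a sequential (threshold) quantizer with respect to the decreasing ordering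
`b_1 > b_2 > ⋯ > b_{|B|}` of the values of `Φ_v`. The hypothesis `hfact` is
the assumed fact about optimal sequential quantization of finite binary-input
channels whose outputs are enumerated in decreasing likelihood-ratio order
with equal-ratio elements consecutive. -/
theorem stmt_10 {L S : Type*} [Fintype L] [Fintype S] [Nonempty L] [Nonempty S]
    (PL : L → ZMod 2 → ℝ) (PS : S → ZMod 2 → ℝ)
    (hL : ∀ l x, 0 < PL l x) (hS : ∀ s x, 0 < PS s x)
    (hL1 : ∀ x, ∑ l : L, PL l x = 1) (hS1 : ∀ x, ∑ s : S, PS s x = 1)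
    (dv : ℕ) (hdv : 1 ≤ dv)
    (M : ℕ) (hM : 1 ≤ M)
    (hfact : ∀ (N : ℕ) (W : Fin N → ZMod 2 → ℝ),
      (∀ y x, 0 ≤ W y x) → (∀ x, ∑ y : Fin N, W y x = 1) →
      -- the enumeration is sorted by decreasing likelihood ratio
      (∀ (i : ℕ) (h : i + 1 < N),
        W ⟨i, Nat.lt_of_succ_lt h⟩ 0 * W ⟨i + 1, h⟩ 1 ≥
          W ⟨i + 1, h⟩ 0 * W ⟨i, Nat.lt_of_succ_lt h⟩ 1) →
      -- elements with equal likelihood ratio are consecutive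
      (∀ i j k : Fin N, i ≤ j → j ≤ k →
        W i 0 * W k 1 = W k 0 * W i 1 → W i 0 * W j 1 = W j 0 * W i 1) →
      ∃ Q : Fin N → Fin M, Monotone Q ∧
        (∀ i j : Fin N, W i 0 * W j 1 = W j 0 * W i 1 → Q i = Q j) ∧
        ∀ f : Fin N → Fin M, mutualInfo W f ≤ mutualInfo W Q) :
    ∃ Λ : ℝ → Fin M,
      -- `Λ` is sequential w.r.t. the labelling `b_1 > b_2 > ⋯ > b_{|B|}` of the
      -- distinct values of `Φ_v` on `L × S^{d_v−1}`
      (∀ a b : ℝ,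
        (∃ (l : L) (s : Fin (dv - 1) → S), PhiV (phiVStar PS) (phiChStar PL) l s = a) →
        (∃ (l : L) (s : Fin (dv - 1) → S), PhiV (phiVStar PS) (phiChStar PL) l s = b) →
        a > b → Λ a ≤ Λ b) ∧
      -- and `Λ ∘ Φ_v` attains the maximal mutual information
      ∀ f : L × (Fin (dv - 1) → S) → Fin M,
        mutualInfo (fun p : L × (Fin (dv - 1) → S) => varPmf PL PS p.1 p.2) f ≤
          mutualInfo (fun p : L × (Fin (dv - 1) → S) => varPmf PL PS p.1 p.2)
            (fun p => Λ (PhiV (phiVStar PS) (phiChStar PL) p.1 p.2)) :=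
  stmt_10_general PL PS hL hS hL1 hS1 dv M hM hfact
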